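/- Let n be a positive integer. For all functions f and g in the complex linear span of {e_j : j ∈ Λ_n^†}, one has (1/(2n³)) · Σ_{k ∈ X_n} f(k/(2n)) · conj(g(k/(2n))) = ∫_{[−1/2,1/2]³} f(x) · conj(g(x)) dx. -/

import Mathlib

open MeasureTheory Complex

attribute [local instance] Classical.propDecidable

/-- The exponential e_k(x) = exp(2 pi i (k1 x1 + k2 x2 + k3 x3)). -/
noncomputable def e3 (k : ℤ × ℤ × ℤ) (x : ℝ × ℝ × ℝ) : ℂ :=
  Complex.exp (2 * Real.pi * Complex.I *
    ((k.1 : ℂ) * x.1 + (k.2.1 : ℂ) * x.2.1 + (k.2.2 : ℂ) * x.2.2))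

/-- The point k/(2n) in three-space. -/
noncomputable def pt3 (n : ℕ) (k : ℤ × ℤ × ℤ) : ℝ × ℝ × ℝ :=
  ((k.1 : ℝ) / (2 * n), (k.2.1 : ℝ) / (2 * n), (k.2.2 : ℝ) / (2 * n))

/-- The cube of integer points with coordinates in [-m, m]. -/
noncomputable def box3 (m : ℕ) : Finset (ℤ × ℤ × ℤ) :=
  Finset.Icc (-(m : ℤ), -(m : ℤ), -(m : ℤ)) ((m : ℤ), (m : ℤ), (m : ℤ))

/-- Λ_n^† = {k : -n ≤ k_ν ± k_μ < n for all ν < μ}. -/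
noncomputable def LamDag (n : ℕ) : Finset (ℤ × ℤ × ℤ) :=
  (box3 n).filter fun k =>
    (-(n : ℤ) ≤ k.1 + k.2.1 ∧ k.1 + k.2.1 < (n : ℤ)) ∧
    (-(n : ℤ) ≤ k.1 - k.2.1 ∧ k.1 - k.2.1 < (n : ℤ)) ∧
    (-(n : ℤ) ≤ k.1 + k.2.2 ∧ k.1 + k.2.2 < (n : ℤ)) ∧
    (-(n : ℤ) ≤ k.1 - k.2.2 ∧ k.1 - k.2.2 < (n : ℤ)) ∧
    (-(n : ℤ) ≤ k.2.1 + k.2.2 ∧ k.2.1 + k.2.2 < (n : ℤ)) ∧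
    (-(n : ℤ) ≤ k.2.1 - k.2.2 ∧ k.2.1 - k.2.2 < (n : ℤ))

/-- X_n = {k : k1 ≡ k2 ≡ k3 (mod 2), -n ≤ k_i < n}. -/
noncomputable def X3 (n : ℕ) : Finset (ℤ × ℤ × ℤ) :=
  (box3 n).filter fun k =>
    k.1 % 2 = k.2.1 % 2 ∧ k.2.1 % 2 = k.2.2 % 2 ∧
    k.1 < (n : ℤ) ∧ k.2.1 < (n : ℤ) ∧ k.2.2 < (n : ℤ)

/-!
Both sides are sesquilinear in `(f, g)`, so it suffices to take `f = e_j`, `g = e_l` with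
`j, l ∈ Λ_n^†`, where `f · conj g = e_{j-l}`. The integral of `e_m` over the unit cube is `δ_{m,0}`.
On the grid, `e_m (k/(2n)) = ω ^ (m · k)` for the primitive `2n`-th root of unity
`ω = exp (π i / n)`, and `X_n` is the disjoint union of the two cubes `{2a + t - n : 0 ≤ a < n}³`,
`t = 0, 1`. Summing geometric series, `∑_{k ∈ X_n} ω ^ (m · k)` is `2n³` if `n ∣ m_i` for all `i`
and `2n ∣ m₁ + m₂ + m₃`, and `0` otherwise. For `m = j - l` the inequalities defining `Λ_n^†`
give `|m_ν ± m_μ| < 2n`, which together with these divisibilities forces `m = 0`.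
-/

open Finset Real

section

variable {K : Type*} [Field K]

theorem IsPrimitiveRoot.sum_range_zpow_pow {ζ : K} {n : ℕ} (hζ : IsPrimitiveRoot ζ n) (m : ℤ) :
    ∑ a ∈ range n, (ζ ^ m) ^ a = if (n : ℤ) ∣ m then (n : K) else 0 := by
  split_ifs with h
  · simp [(hζ.zpow_eq_one_iff_dvd m).2 h]
  · have h1 : ζ ^ m ≠ 1 := mt (hζ.zpow_eq_one_iff_dvd m).1 h
    rw [geom_sum_eq h1, ← zpow_natCast, ← zpow_mul, mul_comm, zpow_mul, zpow_natCast,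
      hζ.pow_eq_one, one_zpow, sub_self, zero_div]

theorem IsPrimitiveRoot.pow_half_eq_neg_one {ω : K} {n : ℕ} (hω : IsPrimitiveRoot ω (2 * n))
    (hn : 0 < n) : ω ^ n = -1 :=
  (hω.pow (by omega) (mul_comm 2 n)).eq_neg_one_of_two_right

theorem sum_product_zpow_add {ω : K} (hω : ω ≠ 0) (R₁ R₂ R₃ : Finset ℤ) (m : ℤ × ℤ × ℤ) :
    ∑ k ∈ R₁ ×ˢ R₂ ×ˢ R₃, ω ^ (m.1 * k.1 + m.2.1 * k.2.1 + m.2.2 * k.2.2) =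
      (∑ a ∈ R₁, ω ^ (m.1 * a)) * (∑ b ∈ R₂, ω ^ (m.2.1 * b)) * ∑ c ∈ R₃, ω ^ (m.2.2 * c) := by
  simp only [sum_product, zpow_add₀ hω, ← mul_sum, ← sum_mul]

noncomputable def gridLine (n : ℕ) (t : ℤ) : Finset ℤ :=
  (range n).image fun a : ℕ => 2 * (a : ℤ) + t - n

theorem X3_eq_union (n : ℕ) :
    X3 n = gridLine n 0 ×ˢ gridLine n 0 ×ˢ gridLine n 0 ∪
      gridLine n 1 ×ˢ gridLine n 1 ×ˢ gridLine n 1 := by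
  ext ⟨k₁, k₂, k₃⟩
  simp only [X3, box3, gridLine, mem_filter, mem_Icc, mem_union, mem_product, mem_image,
    mem_range, Prod.mk_le_mk]
  constructor
  · rintro ⟨⟨⟨h₁, h₂, h₃⟩, -⟩, p₁, p₂, l₁, l₂, l₃⟩
    have hcoord : ∀ t k : ℤ, (k + n) % 2 = t → -n ≤ k → k < n →
        ∃ a : ℕ, a < n ∧ 2 * (a : ℤ) + t - n = k := fun t k ht hk hk' =>
      ⟨((k + n) / 2).toNat, by omega, by omega⟩
    rcases Int.emod_two_eq_zero_or_one (k₁ + n) with h | h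
    · exact .inl ⟨hcoord 0 k₁ h h₁ l₁, hcoord 0 k₂ (by omega) h₂ l₂, hcoord 0 k₃ (by omega) h₃ l₃⟩
    · exact .inr ⟨hcoord 1 k₁ h h₁ l₁, hcoord 1 k₂ (by omega) h₂ l₂, hcoord 1 k₃ (by omega) h₃ l₃⟩
  · rintro (⟨⟨a, ha, rfl⟩, ⟨b, hb, rfl⟩, ⟨c, hc, rfl⟩⟩ | ⟨⟨a, ha, rfl⟩, ⟨b, hb, rfl⟩, ⟨c, hc, rfl⟩⟩) <;>
      omega

theorem disjoint_gridLine (n : ℕ) : Disjoint (gridLine n 0) (gridLine n 1) := by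
  simp only [gridLine, disjoint_left, mem_image]
  omega

theorem sum_gridLine_zpow {ω : K} {n : ℕ} (hω : IsPrimitiveRoot (ω ^ 2) n) (hn : 0 < n)
    (m t : ℤ) :
    ∑ k ∈ gridLine n t, ω ^ (m * k) = ω ^ (m * (t - n)) * if (n : ℤ) ∣ m then (n : K) else 0 := by
  have hω0 : ω ≠ 0 := fun h => hω.ne_zero hn.ne' (by simp [h])
  rw [gridLine, sum_image (by intro a _ b _ h; simp only at h; omega), ← hω.sum_range_zpow_pow,
    mul_sum]
  refine sum_congr rfl fun a _ => ?_
  rw [← zpow_natCast, ← zpow_natCast, ← zpow_mul, ← zpow_mul, ← zpow_add₀ hω0]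
  congr 1
  push_cast
  ring

theorem sum_X3_zpow {ω : K} {n : ℕ} (hω : IsPrimitiveRoot ω (2 * n)) (hn : 0 < n)
    (m : ℤ × ℤ × ℤ) :
    ∑ k ∈ X3 n, ω ^ (m.1 * k.1 + m.2.1 * k.2.1 + m.2.2 * k.2.2) =
      if (n : ℤ) ∣ m.1 ∧ (n : ℤ) ∣ m.2.1 ∧ (n : ℤ) ∣ m.2.2 ∧ 2 * (n : ℤ) ∣ m.1 + m.2.1 + m.2.2
      then 2 * (n : K) ^ 3 else 0 := by
  obtain ⟨m₁, m₂, m₃⟩ := m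
  have hω0 : ω ≠ 0 := hω.ne_zero (by omega)
  rw [X3_eq_union, sum_union (disjoint_product.2 (.inl (disjoint_gridLine n))),
    sum_product_zpow_add hω0, sum_product_zpow_add hω0]
  simp only [sum_gridLine_zpow (hω.pow (by omega) rfl) hn]
  by_cases hdiv : (n : ℤ) ∣ m₁ ∧ (n : ℤ) ∣ m₂ ∧ (n : ℤ) ∣ m₃
  swap
  · simp only [not_and_or] at hdiv
    rcases hdiv with h | h | h <;> simp [h]
  obtain ⟨⟨q₁, rfl⟩, ⟨q₂, rfl⟩, ⟨q₃, rfl⟩⟩ := hdiv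
  set s := (n : ℤ) * q₁ + n * q₂ + n * q₃ with hs
  have hsum : ∀ t : ℤ, ω ^ (n * q₁ * (t - n)) * n * (ω ^ (n * q₂ * (t - n)) * n) *
      (ω ^ (n * q₃ * (t - n)) * n) = n ^ 3 * ω ^ (s * (t - n)) := by
    intro t
    rw [show s * (t - n) = n * q₁ * (t - n) + n * q₂ * (t - n) + n * q₃ * (t - n) by ring,
      zpow_add₀ hω0, zpow_add₀ hω0]
    ring
  simp only [dvd_mul_right, if_true, true_and, hsum]
  split_ifs with h2n
  · have h1 : ∀ t : ℤ, ω ^ (s * t) = 1 := fun t =>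
      (hω.zpow_eq_one_iff_dvd _).2 (by exact_mod_cast dvd_mul_of_dvd_left h2n t)
    rw [h1, h1]
    ring
  · have hodd : Odd (q₁ + q₂ + q₃) := by
      rw [← Int.not_even_iff_odd, even_iff_two_dvd]
      rwa [hs, ← mul_add, ← mul_add, mul_comm 2, Int.mul_dvd_mul_iff_left (by omega)] at h2n
    have hneg : ω ^ s = -1 := by
      rw [hs, ← mul_add, ← mul_add, zpow_mul, zpow_natCast, hω.pow_half_eq_neg_one hn,
        hodd.neg_one_zpow]
    rw [show s * (1 - n) = s * (0 - n) + s by ring, zpow_add₀ hω0, hneg]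
    ring

end

theorem eq_zero_of_two_dvd_add_of_abs_add_sub_le_one {a b c : ℤ} (h : 2 ∣ a + b + c)
    (hab : |a + b| ≤ 1) (hab' : |a - b| ≤ 1) (hac : |a + c| ≤ 1) (hac' : |a - c| ≤ 1)
    (hbc : |b + c| ≤ 1) (hbc' : |b - c| ≤ 1) : a = 0 ∧ b = 0 ∧ c = 0 := by
  rw [abs_le] at hab hab' hac hac' hbc hbc'
  obtain ⟨ha₁, ha₂⟩ : -1 ≤ a ∧ a ≤ 1 := by omega
  obtain ⟨hb₁, hb₂⟩ : -1 ≤ b ∧ b ≤ 1 := by omega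
  interval_cases a <;> interval_cases b <;> omega

theorem eq_of_mem_LamDag_of_dvd {n : ℕ} {j l : ℤ × ℤ × ℤ} (hj : j ∈ LamDag n) (hl : l ∈ LamDag n)
    (h : (n : ℤ) ∣ (j - l).1 ∧ (n : ℤ) ∣ (j - l).2.1 ∧ (n : ℤ) ∣ (j - l).2.2 ∧
      2 * (n : ℤ) ∣ (j - l).1 + (j - l).2.1 + (j - l).2.2) : j = l := by
  obtain ⟨j₁, j₂, j₃⟩ := j
  obtain ⟨l₁, l₂, l₃⟩ := l
  simp only [LamDag, box3, mem_filter, mem_Icc, Prod.mk_le_mk] at hj hl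
  obtain ⟨⟨q₁, h₁⟩, ⟨q₂, h₂⟩, ⟨q₃, h₃⟩, hs⟩ := h
  simp only [Prod.mk_sub_mk] at h₁ h₂ h₃ hs
  have hn : (0 : ℤ) < n := by omega
  have hq : 2 ∣ q₁ + q₂ + q₃ := by
    rwa [h₁, h₂, h₃, ← mul_add, ← mul_add, mul_comm 2, Int.mul_dvd_mul_iff_left hn.ne'] at hs
  have hb : ∀ x : ℤ, -(2 * n) < n * x → n * x < 2 * n → |x| ≤ 1 := fun x h h' =>
    abs_le.2 ⟨by nlinarith, by nlinarith⟩
  obtain ⟨rfl, rfl, rfl⟩ := eq_zero_of_two_dvd_add_of_abs_add_sub_le_one hq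
    (hb _ (by linarith) (by linarith)) (hb _ (by linarith) (by linarith))
    (hb _ (by linarith) (by linarith)) (hb _ (by linarith) (by linarith))
    (hb _ (by linarith) (by linarith)) (hb _ (by linarith) (by linarith))
  simp only [mul_zero, sub_eq_zero] at h₁ h₂ h₃
  rw [h₁, h₂, h₃]

theorem e3_pt3 (n : ℕ) (m k : ℤ × ℤ × ℤ) :
    e3 m (pt3 n k) = cexp (2 * π * I / (2 * n : ℕ)) ^ (m.1 * k.1 + m.2.1 * k.2.1 + m.2.2 * k.2.2) := by
  rw [← Complex.exp_int_mul, e3, pt3]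
  congr 1
  push_cast
  ring

theorem e3_mul_star_e3 (j l : ℤ × ℤ × ℤ) (x : ℝ × ℝ × ℝ) : e3 j x * star (e3 l x) = e3 (j - l) x := by
  rw [e3, e3, e3, Complex.star_def, ← Complex.exp_conj, ← Complex.exp_add]
  congr 1
  simp only [map_mul, map_add, map_ofNat, Complex.conj_ofReal, Complex.conj_I, map_intCast,
    Prod.fst_sub, Prod.snd_sub]
  push_cast
  ring

theorem continuous_e3 (m : ℤ × ℤ × ℤ) : Continuous (e3 m) := by
  unfold e3
  fun_prop

theorem setIntegral_Icc_exp_int_mul (m : ℤ) :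
    ∫ t in Set.Icc (-(1:ℝ)/2) (1/2), cexp (2 * π * I * (m * t)) = if m = 0 then 1 else 0 := by
  rw [integral_Icc_eq_integral_Ioc, ← intervalIntegral.integral_of_le (by norm_num)]
  split_ifs with hm
  · norm_num [hm]
  · have hc : 2 * π * I * m ≠ 0 := by simp [Real.pi_ne_zero, hm]
    simp only [← mul_assoc, integral_exp_mul_complex hc]
    rw [div_eq_zero_iff, sub_eq_zero]
    refine .inl (Complex.exp_eq_exp_iff_exists_int.2 ⟨m, ?_⟩)
    push_cast
    ring

theorem e3_eq_mul (m : ℤ × ℤ × ℤ) (x : ℝ × ℝ × ℝ) :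
    e3 m x = cexp (2 * π * I * (m.1 * x.1)) *
      (cexp (2 * π * I * (m.2.1 * x.2.1)) * cexp (2 * π * I * (m.2.2 * x.2.2))) := by
  rw [e3, ← Complex.exp_add, ← Complex.exp_add]
  ring_nf

theorem setIntegral_cube_e3 (m : ℤ × ℤ × ℤ) :
    ∫ x in Set.Icc (-(1:ℝ)/2, -(1:ℝ)/2, -(1:ℝ)/2) ((1:ℝ)/2, (1:ℝ)/2, (1:ℝ)/2), e3 m x =
      if m = 0 then 1 else 0 := by
  simp only [e3_eq_mul, Set.Icc_prod_eq, Measure.volume_eq_prod, ← Measure.prod_restrict]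
  rw [integral_prod_mul (fun t : ℝ => cexp (2 * π * I * (m.1 * t)))
    (fun y : ℝ × ℝ => cexp (2 * π * I * (m.2.1 * y.1)) * cexp (2 * π * I * (m.2.2 * y.2))),
    integral_prod_mul (fun t : ℝ => cexp (2 * π * I * (m.2.1 * t)))
      (fun t : ℝ => cexp (2 * π * I * (m.2.2 * t)))]
  simp only [setIntegral_Icc_exp_int_mul, Prod.ext_iff, Prod.fst_zero, Prod.snd_zero]
  split_ifs <;> simp_all

theorem sum_mul_star_eq_integral_of_mem_span {α β ι : Type*} [MeasurableSpace α] {μ : Measure α}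
    {φ : ι → α → ℂ} {S : Set ι} (w : ℂ) (K : Finset β) (P : β → α)
    (hint : ∀ i ∈ S, ∀ j ∈ S, Integrable (fun x => φ i x * star (φ j x)) μ)
    (hexact : ∀ i ∈ S, ∀ j ∈ S,
      w * ∑ k ∈ K, φ i (P k) * star (φ j (P k)) = ∫ x, φ i x * star (φ j x) ∂μ)
    {f g : α → ℂ} (hf : f ∈ Submodule.span ℂ (φ '' S)) (hg : g ∈ Submodule.span ℂ (φ '' S)) :
    w * ∑ k ∈ K, f (P k) * star (g (P k)) = ∫ x, f x * star (g x) ∂μ := by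
  obtain ⟨s, hs, c, rfl⟩ := (Submodule.mem_span_image_iff_exists_fun ℂ).1 hf
  obtain ⟨t, ht, d, rfl⟩ := (Submodule.mem_span_image_iff_exists_fun ℂ).1 hg
  have hexpand : ∀ x, (∑ i, c i • φ i) x * star ((∑ j, d j • φ j) x) =
      ∑ i, ∑ j, c i * star (d j) * (φ i x * star (φ j x)) := by
    intro x
    simp only [Finset.sum_apply, Pi.smul_apply, smul_eq_mul, star_sum, star_mul', sum_mul_sum]
    exact sum_congr rfl fun i _ => sum_congr rfl fun j _ => by ring
  have hint' : ∀ (i : s) (j : t), Integrable (fun x => φ i x * star (φ j x)) μ :=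
    fun i j => hint i (hs i.2) j (ht j.2)
  simp only [hexpand]
  rw [integral_finsetSum _ fun i _ => integrable_finsetSum _ fun j _ => (hint' i j).const_mul _]
  simp only [integral_finsetSum _ fun j _ => (hint' _ j).const_mul _, integral_const_mul,
    ← hexact _ (hs (Subtype.prop _)) _ (ht (Subtype.prop _))]
  simp only [mul_sum]
  rw [sum_comm]
  refine sum_congr rfl fun i _ => ?_
  rw [sum_comm]
  exact sum_congr rfl fun j _ => sum_congr rfl fun k _ => by ring

theorem discrete_inner_product_eq_integral_3d (n : ℕ) (hn : 0 < n)
    (f g : ℝ × ℝ × ℝ → ℂ)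
    (hf : f ∈ Submodule.span ℂ (e3 '' (LamDag n : Set (ℤ × ℤ × ℤ))))
    (hg : g ∈ Submodule.span ℂ (e3 '' (LamDag n : Set (ℤ × ℤ × ℤ)))) :
    (1 / (2 * (n : ℂ) ^ 3)) * ∑ k ∈ X3 n, f (pt3 n k) * star (g (pt3 n k))
      = ∫ x in Set.Icc ((-(1:ℝ)/2, -(1:ℝ)/2, -(1:ℝ)/2)) (((1:ℝ)/2, (1:ℝ)/2, (1:ℝ)/2)), f x * star (g x) := by
  refine sum_mul_star_eq_integral_of_mem_span _ _ _ (fun j _ l _ => ?_) (fun j hj l hl => ?_) hf hg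
  · simp only [e3_mul_star_e3]
    exact (continuous_e3 _).integrableOn_Icc
  simp only [e3_mul_star_e3]
  rw [setIntegral_cube_e3]
  simp only [e3_pt3]
  rw [sum_X3_zpow (Complex.isPrimitiveRoot_exp _ (by omega)) hn]
  by_cases hjl : j = l
  · have hn' : (n : ℂ) ≠ 0 := Nat.cast_ne_zero.2 hn.ne'
    rw [hjl, sub_self, if_pos (by simp), if_pos rfl]
    field_simp
  · rw [if_neg (mt (eq_of_mem_LamDag_of_dvd hj hl) hjl), if_neg (sub_ne_zero.2 hjl), mul_zero]
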